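/- Let G be a nonempty finite simple graph in which every maximal clique has exactly N vertices (for some fixed N ≥ 1). Then every vertex of G has vertex dimension N − 1; that is, for every vertex v of G, 1 + dim S_G(v) = N − 1. -/

import Mathlib

open Classical in
/-- The Knill inductive dimension of the subgraph of `G` induced on the
finite vertex set `A`: the empty graph has dimension `-1`, and otherwise
`dim = (1/|A|) · Σ_{v ∈ A} (1 + dim S(v))`, where the sphere `S(v)` is the
induced subgraph on the neighbors of `v` inside `A`. -/
noncomputable def gdim {V : Type*} (G : SimpleGraph V) (A : Finset V) : ℚ :=
  if A.card = 0 then -1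
  else (A.card : ℚ)⁻¹ *
    ∑ v ∈ A.attach, (1 + gdim G (A.filter (fun u => G.Adj v.1 u)))
termination_by A.card
decreasing_by
  apply Finset.card_lt_card
  refine ⟨Finset.filter_subset _ _, fun hsub => ?_⟩
  have hv := hsub v.2
  rw [Finset.mem_filter] at hv
  exact G.ne_of_adj hv.2 rfl

open Classical in
/-- Any clique contained in `A` extends to a clique maximal among cliques in `A`. -/
lemma exists_maximal_clique {V : Type*} [Fintype V] (G : SimpleGraph V)
    (A s : Finset V) (hsA : s ⊆ A) (hs : G.IsClique (s : Set V)) :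
    ∃ t : Finset V, s ⊆ t ∧ t ⊆ A ∧ G.IsClique (t : Set V) ∧
      ∀ u : Finset V, u ⊆ A → G.IsClique (u : Set V) → t ⊆ u → u = t := by
  classical
  set C := A.powerset.filter (fun t : Finset V => G.IsClique (t : Set V) ∧ s ⊆ t) with hC
  have hsC : s ∈ C := by
    simp [hC, Finset.mem_filter, Finset.mem_powerset, hsA, hs]
  obtain ⟨t, htC, hmax⟩ := C.exists_max_image Finset.card ⟨s, hsC⟩
  rw [hC, Finset.mem_filter, Finset.mem_powerset] at htC
  refine ⟨t, htC.2.2, htC.1, htC.2.1, fun u huA hu htu => ?_⟩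
  have huC : u ∈ C := by
    rw [hC, Finset.mem_filter, Finset.mem_powerset]
    exact ⟨huA, hu, htC.2.2.trans htu⟩
  exact (Finset.eq_of_subset_of_card_le htu (hmax u huC)).symm

open Classical in
/-- If every maximal clique inside `A` has `M` vertices, then `gdim G A = M - 1`. -/
lemma gdim_of_pure {V : Type*} [Fintype V] (G : SimpleGraph V) (A : Finset V) :
    ∀ M : ℕ, (∀ s : Finset V, s ⊆ A → G.IsClique (s : Set V) →
      (∀ t : Finset V, t ⊆ A → G.IsClique (t : Set V) → s ⊆ t → t = s) →
      s.card = M) → gdim G A = (M : ℚ) - 1 := by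
  classical
  induction A using Finset.strongInduction with
  | _ A ih =>
    intro M hpure
    by_cases hA : A.card = 0
    · -- empty case: M = 0
      have hM : (0 : ℕ) = M := by
        refine hpure ∅ (Finset.empty_subset _) (by simp) (fun t htA htc hst => ?_)
        have : A = ∅ := Finset.card_eq_zero.mp hA
        exact Finset.subset_empty.mp (this ▸ htA)
      rw [gdim, if_pos hA, ← hM]
      norm_num
    · -- nonempty case
      obtain ⟨v0, hv0⟩ := Finset.card_pos.mp (Nat.pos_of_ne_zero hA)
      have hM1 : 1 ≤ M := by
        obtain ⟨t, hst, htA, htc, hmax⟩ := exists_maximal_clique G A {v0}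
          (Finset.singleton_subset_iff.mpr hv0) (by simp)
        have : t.card = M := hpure t htA htc hmax
        have : 1 ≤ t.card := Finset.card_pos.mpr ⟨v0, hst (Finset.mem_singleton_self v0)⟩
        omega
      -- each sphere is pure with M - 1
      have hsphere : ∀ v ∈ A, gdim G (A.filter (fun u => G.Adj v u)) = ((M : ℚ) - 1) - 1 := by
        intro v hv
        set B := A.filter (fun u => G.Adj v u) with hB
        have hvB : v ∉ B := by
          simp [hB, Finset.mem_filter, G.irrefl]
        have hBA : B ⊂ A := ⟨Finset.filter_subset _ _, fun hsub => hvB (hsub hv)⟩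
        have hpureB : ∀ s : Finset V, s ⊆ B → G.IsClique (s : Set V) →
            (∀ t : Finset V, t ⊆ B → G.IsClique (t : Set V) → s ⊆ t → t = s) →
            s.card = M - 1 := by
          intro s hsB hsc hsmax
          have hvs : v ∉ s := fun h => hvB (hsB h)
          have hadj : ∀ u ∈ s, G.Adj v u := fun u hu =>
            (Finset.mem_filter.mp (hsB hu)).2
          have hins : G.IsClique ((insert v s : Finset V) : Set V) := by
            rw [Finset.coe_insert]
            exact hsc.insert (fun b hb _ => hadj b hb)
          have hinsA : insert v s ⊆ A := by
            intro u hu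
            rcases Finset.mem_insert.mp hu with h | h
            · exact h ▸ hv
            · exact (Finset.filter_subset _ _) (hsB h)
          have hinsmax : ∀ t : Finset V, t ⊆ A → G.IsClique (t : Set V) →
              insert v s ⊆ t → t = insert v s := by
            intro t htA htc hst
            have hvt : v ∈ t := hst (Finset.mem_insert_self v s)
            have herase : t.erase v ⊆ B := by
              intro u hu
              rw [Finset.mem_erase] at hu
              rw [hB, Finset.mem_filter]
              exact ⟨htA hu.2, htc hvt hu.2 (Ne.symm hu.1)⟩
            have heraseclique : G.IsClique ((t.erase v : Finset V) : Set V) :=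
              htc.subset (by simp [Finset.coe_subset, Finset.erase_subset])
            have hserase : s ⊆ t.erase v := by
              intro u hu
              rw [Finset.mem_erase]
              exact ⟨fun h => hvs (h ▸ hu), hst (Finset.mem_insert_of_mem hu)⟩
            have heq : t.erase v = s := hsmax _ herase heraseclique hserase
            apply Finset.Subset.antisymm _ hst
            intro u hu
            rcases eq_or_ne u v with h | h
            · exact h ▸ Finset.mem_insert_self v s
            · exact Finset.mem_insert_of_mem (heq ▸ Finset.mem_erase.mpr ⟨h, hu⟩)
          have hcard : (insert v s).card = M := hpure _ hinsA hins hinsmax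
          rw [Finset.card_insert_of_notMem hvs] at hcard
          omega
        have := ih B hBA (M - 1) hpureB
        rw [this]
        have : ((M - 1 : ℕ) : ℚ) = (M : ℚ) - 1 := by
          push_cast [hM1]; ring
        rw [this]
      rw [gdim, if_neg hA]
      have hsum : ∑ v ∈ A.attach, (1 + gdim G (A.filter (fun u => G.Adj v.1 u)))
          = ∑ _v ∈ A.attach, ((M : ℚ) - 1) := by
        apply Finset.sum_congr rfl
        intro v _
        rw [hsphere v.1 v.2]
        ring
      rw [hsum, Finset.sum_const, Finset.card_attach, nsmul_eq_mul]
      field_simp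

/-- If `G` is a nonempty finite simple graph all of whose
maximal cliques have exactly `N` vertices (`N ≥ 1`), then every vertex `v`
has vertex dimension `N − 1`: `1 + dim S_G(v) = N − 1`. -/
theorem vertex_dim_of_pure {V : Type*} [Fintype V] [Nonempty V]
    (G : SimpleGraph V) [DecidableRel G.Adj] (N : ℕ) (hN : 1 ≤ N)
    (hpure : ∀ s : Finset V, G.IsClique (s : Set V) →
      (∀ t : Finset V, G.IsClique (t : Set V) → s ⊆ t → t = s) → s.card = N) :
    ∀ v : V, 1 + gdim G (Finset.univ.filter (fun u => G.Adj v u)) = (N : ℚ) - 1 := by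
  classical
  intro v
  set A := Finset.univ.filter (fun u => G.Adj v u) with hA
  have hvA : v ∉ A := by simp [hA, G.irrefl]
  have hpureA : ∀ s : Finset V, s ⊆ A → G.IsClique (s : Set V) →
      (∀ t : Finset V, t ⊆ A → G.IsClique (t : Set V) → s ⊆ t → t = s) →
      s.card = N - 1 := by
    intro s hsA hsc hsmax
    have hvs : v ∉ s := fun h => hvA (hsA h)
    have hadj : ∀ u ∈ s, G.Adj v u := fun u hu =>
      (Finset.mem_filter.mp (hsA hu)).2
    have hins : G.IsClique ((insert v s : Finset V) : Set V) := by
      rw [Finset.coe_insert]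
      exact hsc.insert (fun b hb _ => hadj b hb)
    have hinsmax : ∀ t : Finset V, G.IsClique (t : Set V) →
        insert v s ⊆ t → t = insert v s := by
      intro t htc hst
      have hvt : v ∈ t := hst (Finset.mem_insert_self v s)
      have herase : t.erase v ⊆ A := by
        intro u hu
        rw [Finset.mem_erase] at hu
        rw [hA, Finset.mem_filter]
        exact ⟨Finset.mem_univ u, htc hvt hu.2 (Ne.symm hu.1)⟩
      have heraseclique : G.IsClique ((t.erase v : Finset V) : Set V) :=
        htc.subset (by simp [Finset.coe_subset, Finset.erase_subset])
      have hserase : s ⊆ t.erase v := by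
        intro u hu
        rw [Finset.mem_erase]
        exact ⟨fun h => hvs (h ▸ hu), hst (Finset.mem_insert_of_mem hu)⟩
      have heq : t.erase v = s := hsmax _ herase heraseclique hserase
      apply Finset.Subset.antisymm _ hst
      intro u hu
      rcases eq_or_ne u v with h | h
      · exact h ▸ Finset.mem_insert_self v s
      · exact Finset.mem_insert_of_mem (heq ▸ Finset.mem_erase.mpr ⟨h, hu⟩)
    have hcard : (insert v s).card = N := hpure _ hins hinsmax
    rw [Finset.card_insert_of_notMem hvs] at hcard
    omega
  rw [gdim_of_pure G A (N - 1) hpureA]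
  push_cast [hN]
  ring
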